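/- For the solution g of the Smoluchowski tree equation, the branching and grafting actions coincide: B_∨(g) = graft(g, g) as formal power series; equivalently, for every n ≥ 0, B_∨(g_n) = Σ_{k=0}^{n} binomial(n,k) graft(g_{n−k}, g_k) = g_{n+1}. -/

import Mathlib

/-- Rooted planar binary trees. -/
inductive PBTree : Type
  | leaf : PBTree
  | graft : PBTree → PBTree → PBTree
  deriving DecidableEq

namespace PBTree

/-- The grade of a tree: its number of internal vertices. -/
def grade : PBTree → ℕ
  | leaf => 0
  | graft t1 t2 => grade t1 + grade t2 + 1

/-- The weight character ω. -/
def weight : PBTree → ℕ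
  | leaf => 1
  | graft t1 t2 => Nat.choose (grade t1 + grade t2) (grade t1) * weight t1 * weight t2

/-- The branching operator on a single tree: attach a cherry `∨` successively and
additively at each free leaf.  Values in the free ℚ-vector space `PBTree →₀ ℚ`. -/
noncomputable def Bv : PBTree → (PBTree →₀ ℚ)
  | leaf => Finsupp.single (graft leaf leaf) 1
  | graft t1 t2 =>
      (Bv t1).sum (fun σ a => Finsupp.single (graft σ t2) a)
        + (Bv t2).sum (fun σ a => Finsupp.single (graft t1 σ) a)

/-- The linear extension of the branching operator `B_∨` to the free vector space. -/
noncomputable def BvLin (f : PBTree →₀ ℚ) : PBTree →₀ ℚ :=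
  f.sum fun τ a => a • Bv τ

/-- The bilinear extension of grafting to the free vector space. -/
noncomputable def graftLin (f g : PBTree →₀ ℚ) : PBTree →₀ ℚ :=
  f.sum fun τ1 a => g.sum fun τ2 b => Finsupp.single (graft τ1 τ2) (a * b)

/-- The grading operator `G`, sending a tree `τ` of positive grade to `(1/|τ|)·τ`,
extended linearly. -/
noncomputable def Gop (f : PBTree →₀ ℚ) : PBTree →₀ ℚ :=
  f.sum fun τ a => Finsupp.single τ ((grade τ : ℚ)⁻¹ * a)

end PBTree

/-!
The branching operator `B_∨` is a derivation for grafting: on a grafted tree it branches either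
subtree. Since `ω (graft t₁ t₂) = C(|t₁| + |t₂|, |t₁|) ω(t₁) ω(t₂)`, the homogeneous parts of `g`
satisfy the binomial recursion `g_{n+1} = Σ_k C(n,k) graft(g_{n-k}, g_k)`. Applying the derivation
to this recursion and regrouping with Pascal's rule gives `B_∨ g_n = g_{n+1}` by strong induction,
starting from `B_∨(leaf) = graft(leaf, leaf)`.
-/

open Finset

theorem apply_eq_succ_of_leibniz {M : Type*} [AddCommMonoid M] (mul : M → M → M)
    (D : M →+ M) (hD : ∀ x y, D (mul x y) = mul (D x) y + mul x (D y)) (g : ℕ → M)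
    (hg : ∀ n, g (n + 1) = ∑ k ∈ range (n + 1), n.choose k • mul (g (n - k)) (g k))
    (h0 : D (g 0) = g 1) (n : ℕ) : D (g n) = g (n + 1) := by
  induction n using Nat.strong_induction_on with
  | _ n ih =>
    rcases n with _ | m
    · exact h0
    calc D (g (m + 1))
        = ∑ k ∈ range (m + 1), m.choose k •
            (mul (g (m + 1 - k)) (g k) + mul (g (m - k)) (g (k + 1))) := by
          rw [hg m, map_sum]
          refine sum_congr rfl fun k hk => ?_
          have hk : k ≤ m := Nat.lt_succ_iff.mp (mem_range.mp hk)
          rw [map_nsmul, hD, ih _ (by omega), ih _ (by omega), Nat.sub_add_comm hk]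
      _ = g (m + 2) := by
          rw [hg (m + 1), sum_choose_succ_nsmul (fun i j => mul (g j) (g i))]
          simp only [smul_add, sum_add_distrib]

namespace PBTree

@[simp]
theorem graftLin_apply_leaf (f g : PBTree →₀ ℚ) : graftLin f g leaf = 0 := by
  simp [graftLin, Finsupp.sum_apply]

@[simp]
theorem graftLin_apply_graft (f g : PBTree →₀ ℚ) (τ₁ τ₂ : PBTree) :
    graftLin f g (graft τ₁ τ₂) = f τ₁ * g τ₂ := by
  have single_graft_apply : ∀ (a b : PBTree) (x y : ℚ),
      Finsupp.single (graft a b) (x * y) (graft τ₁ τ₂)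
        = Finsupp.single a x τ₁ * Finsupp.single b y τ₂ := by
    intro a b x y
    simp only [Finsupp.single_apply, graft.injEq, ite_and]
    split_ifs <;> simp
  simp only [graftLin, Finsupp.sum_apply, single_graft_apply, ← Finsupp.mul_sum,
    ← Finsupp.sum_mul]
  rw [← Finsupp.sum_apply, ← Finsupp.sum_apply, Finsupp.sum_single, Finsupp.sum_single]

theorem graftLin_add_left (f₁ f₂ g : PBTree →₀ ℚ) :
    graftLin (f₁ + f₂) g = graftLin f₁ g + graftLin f₂ g := by
  ext (_ | _) <;> simp [add_mul]

theorem graftLin_add_right (f g₁ g₂ : PBTree →₀ ℚ) :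
    graftLin f (g₁ + g₂) = graftLin f g₁ + graftLin f g₂ := by
  ext (_ | _) <;> simp [mul_add]

theorem graftLin_smul_left (c : ℚ) (f g : PBTree →₀ ℚ) :
    graftLin (c • f) g = c • graftLin f g := by
  ext (_ | _) <;> simp [mul_assoc]

theorem graftLin_smul_right (c : ℚ) (f g : PBTree →₀ ℚ) :
    graftLin f (c • g) = c • graftLin f g := by
  ext (_ | _) <;> simp [mul_left_comm]

theorem graftLin_single_single (τ₁ τ₂ : PBTree) (a b : ℚ) :
    graftLin (Finsupp.single τ₁ a) (Finsupp.single τ₂ b)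
      = Finsupp.single (graft τ₁ τ₂) (a * b) := by
  simp [graftLin]

theorem Bv_graft (τ₁ τ₂ : PBTree) :
    Bv (graft τ₁ τ₂)
      = graftLin (Bv τ₁) (Finsupp.single τ₂ 1) + graftLin (Finsupp.single τ₁ 1) (Bv τ₂) := by
  simp [Bv, graftLin, -Finsupp.single_mul]

theorem BvLin_eq_linearCombination (f : PBTree →₀ ℚ) :
    BvLin f = Finsupp.linearCombination ℚ Bv f :=
  (Finsupp.linearCombination_apply ℚ f).symm

theorem BvLin_graftLin (f g : PBTree →₀ ℚ) :
    BvLin (graftLin f g) = graftLin (BvLin f) g + graftLin f (BvLin g) := by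
  simp only [BvLin_eq_linearCombination]
  induction f using Finsupp.induction_linear with
  | zero => simp [graftLin]
  | add f₁ f₂ h₁ h₂ =>
    simp only [graftLin_add_left, map_add, h₁, h₂]
    abel
  | single τ₁ a =>
    induction g using Finsupp.induction_linear with
    | zero => simp [graftLin]
    | add g₁ g₂ h₁ h₂ =>
      simp only [graftLin_add_right, map_add, h₁, h₂]
      abel
    | single τ₂ b =>
      rw [graftLin_single_single, ← Finsupp.smul_single_one τ₁ a, ← Finsupp.smul_single_one τ₂ b]
      simp only [map_smul, Finsupp.linearCombination_single, one_smul, Bv_graft,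
        graftLin_smul_left, graftLin_smul_right]
      module

section WeightSeries

variable {g : ℕ → PBTree →₀ ℚ} (hg : ∀ n τ, g n τ = if grade τ = n then (weight τ : ℚ) else 0)
include hg

theorem weightSeries_zero : g 0 = Finsupp.single leaf 1 := by
  ext (_ | _) <;> simp [hg, grade, weight]

theorem weightSeries_succ (n : ℕ) :
    g (n + 1) = ∑ k ∈ range (n + 1), (n.choose k : ℚ) • graftLin (g (n - k)) (g k) := by
  ext (_ | ⟨τ₁, τ₂⟩)
  · simp [hg, grade, Finsupp.finsetSum_apply]
  simp only [Finsupp.finsetSum_apply, Finsupp.smul_apply, graftLin_apply_graft, hg, grade, weight,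
    smul_eq_mul, Nat.add_right_cancel_iff]
  by_cases hn : grade τ₁ + grade τ₂ = n
  · subst hn
    rw [sum_eq_single (grade τ₂)]
    · simp [mul_assoc, ← Nat.choose_symm_add]
    · intro k _ hk
      simp [Ne.symm hk]
    · simp
  · rw [if_neg hn]
    refine (sum_eq_zero fun k hk => ?_).symm
    have hkn := mem_range.mp hk
    split_ifs <;> first | omega | simp

theorem BvLin_weightSeries (n : ℕ) : BvLin (g n) = g (n + 1) := by
  have hbase : BvLin (g 0) = g 1 := by
    simp [weightSeries_succ hg, weightSeries_zero hg, BvLin, Bv, graftLin_single_single]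
  simp only [BvLin_eq_linearCombination] at hbase ⊢
  refine apply_eq_succ_of_leibniz graftLin (Finsupp.linearCombination ℚ Bv).toAddMonoidHom
    (fun f f' => ?_) g (fun n => ?_) hbase n
  · simpa only [BvLin_eq_linearCombination, LinearMap.toAddMonoidHom_coe] using BvLin_graftLin f f'
  · simp only [weightSeries_succ hg n, Nat.cast_smul_eq_nsmul]

end WeightSeries

end PBTree

open PBTree in
/-- For the solution of the Smoluchowski tree equation, branching and grafting coincide:
for every `n ≥ 0`, `B_∨(g_n) = Σ_{k=0}^{n} binomial(n,k) graft(g_{n−k}, g_k) = g_{n+1}`,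
where `gn n = Σ_{|τ|=n} ω(τ)·τ` (characterized by its coefficients). -/
theorem branching_eq_grafting_on_solution
    (gn : ℕ → (PBTree →₀ ℚ))
    (hgn : ∀ n τ, gn n τ = if grade τ = n then (weight τ : ℚ) else 0) (n : ℕ) :
    BvLin (gn n)
        = ∑ k ∈ Finset.range (n + 1), (n.choose k : ℚ) • graftLin (gn (n - k)) (gn k)
    ∧ BvLin (gn n) = gn (n + 1) := by
  have hB := BvLin_weightSeries hgn n
  exact ⟨hB.trans (weightSeries_succ hgn n), hB⟩
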